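/- Let a > 0, τ > 0, and let N ≥ 2 be an integer. Then the following identity holds: (1/π)·Σ_{n = p^{2k+1}, p ≤ N, k ≥ 0} (−1)^k · (Λ₁(n)/√n)·K̂_a(τ·ln n) = (1/π)·∫_0^{+∞} K_a(u)·S_N(u) du, where the sum on the left ranges over all odd powers n = p^{2k+1} of primes p ≤ N, and S_N(u) = Σ_{p ≤ N} arctan((2√p/(p−1))·cos(u·τ·ln p)). -/

import Mathlib

/-!
Put `x = p^{-1/2}`. The `p`-part of the left side is
`Σ_k (-1)^k x^{2k+1}/(2k+1) · Re K̂_a((2k+1) τ log p)`. Because `K_a` is even,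
`Re K̂_a(v) = 2 ∫_0^∞ K_a(u) cos(v u) du`, and since the coefficients are dominated by `|x|^{2k+1}`,
sum and integral can be exchanged. The series `Σ_k (-1)^k x^{2k+1} cos((2k+1)θ)/(2k+1)` is the
real part of the Taylor series of `arctan` at `x e^{iθ}`, so it equals
`½ arctan(2x cos θ / (1 - x²))`, and `2x / (1 - x²) = 2√p / (p - 1)`.
-/

open Real MeasureTheory Complex

/-- `K_a(z) = exp(-a cosh z)` for complex `z`. -/
noncomputable def KaC (a : ℝ) (z : ℂ) : ℂ := Complex.exp (-(a : ℂ) * Complex.cosh z)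

/-- The Fourier transform `K̂_a(u) = ∫ K_a(x) e^{-iux} dx`. -/
noncomputable def Khat (a : ℝ) (u : ℝ) : ℂ :=
  ∫ x : ℝ, KaC a (x : ℂ) * Complex.exp (-Complex.I * (u * x))

/-- `S_N(u) = Σ_{p ≤ N prime} arctan((2√p/(p−1)) cos(uτ log p))`. -/
noncomputable def SN (N : ℕ) (τ : ℝ) (u : ℝ) : ℝ :=
  ∑ p ∈ Finset.filter Nat.Prime (Finset.Iic N),
    Real.arctan ((2 * Real.sqrt p / ((p : ℝ) - 1)) * Real.cos (u * τ * Real.log p))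

theorem Real.one_add_sq_div_two_le_cosh (x : ℝ) : 1 + x ^ 2 / 2 ≤ Real.cosh x := by
  simpa [Finset.sum_range_succ] using sum_le_hasSum (Finset.range 2)
    (fun n _ => div_nonneg ((even_two_mul n).pow_nonneg x) (Nat.cast_nonneg _)) (Real.hasSum_cosh x)

theorem integrable_exp_neg_mul_cosh {a : ℝ} (ha : 0 < a) :
    Integrable fun x : ℝ => Real.exp (-a * Real.cosh x) := by
  refine (integrable_exp_neg_mul_sq (half_pos ha)).mono' (by fun_prop) (ae_of_all _ fun x => ?_)
  rw [Real.norm_of_nonneg (Real.exp_nonneg _), Real.exp_le_exp]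
  nlinarith [Real.one_add_sq_div_two_le_cosh x]

theorem integrable_exp_neg_mul_cosh_mul {a C : ℝ} (ha : 0 < a) {f : ℝ → ℝ} (hf : Continuous f)
    (hC : ∀ x, |f x| ≤ C) :
    Integrable fun x : ℝ => Real.exp (-a * Real.cosh x) * f x :=
  (integrable_exp_neg_mul_cosh ha).mul_bdd hf.aestronglyMeasurable (ae_of_all _ hC)

theorem KaC_ofReal (a x : ℝ) : KaC a x = (Real.exp (-a * Real.cosh x) : ℂ) := by
  simp [KaC, ← Complex.ofReal_cosh]

theorem Khat_re {a : ℝ} (ha : 0 < a) (v : ℝ) :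
    (Khat a v).re = ∫ x, Real.exp (-a * Real.cosh x) * Real.cos (v * x) := by
  have hint : Integrable fun x : ℝ => KaC a x * Complex.exp (-Complex.I * (v * x)) := by
    simp_rw [KaC_ofReal]
    refine (integrable_exp_neg_mul_cosh ha).ofReal.mul_bdd (c := 1) (by fun_prop)
      (ae_of_all _ fun x => ?_)
    simp [Complex.norm_exp]
  rw [Khat, ← RCLike.re_eq_complex_re, ← integral_re hint]
  refine integral_congr_ae (ae_of_all _ fun x => ?_)
  simp [KaC_ofReal, Complex.mul_re, Complex.exp_re, Complex.exp_im, mul_comm]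

theorem integral_eq_two_mul_integral_Ioi_of_even {f : ℝ → ℝ} (hf : Integrable f)
    (heven : ∀ x, f (-x) = f x) :
    ∫ x, f x = 2 * ∫ x in Set.Ioi 0, f x := by
  have hIic : ∫ x in Set.Iic 0, f x = ∫ x in Set.Ioi 0, f x := by
    simpa [heven] using (integral_comp_neg_Ioi 0 f).symm
  rw [← integral_add_compl measurableSet_Ioi hf, Set.compl_Ioi, hIic]
  ring

theorem Khat_re_eq_two_mul_integral_Ioi {a : ℝ} (ha : 0 < a) (v : ℝ) :
    (Khat a v).re = 2 * ∫ x in Set.Ioi 0, Real.exp (-a * Real.cosh x) * Real.cos (v * x) := by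
  rw [Khat_re ha, integral_eq_two_mul_integral_Ioi_of_even
    (integrable_exp_neg_mul_cosh_mul ha (by fun_prop) fun x => Real.abs_cos_le_one (v * x))
    fun x => by simp [Real.cosh_neg]]

theorem Complex.re_arctan {z : ℂ} (hz : ‖z‖ < 1) :
    (Complex.arctan z).re = Real.arctan (2 * z.re / (1 - Complex.normSq z)) / 2 := by
  have hnormSq : Complex.normSq z < 1 := by
    rw [Complex.normSq_eq_norm_sq]; nlinarith [norm_nonneg z]
  set d : ℂ := 1 - z * I
  have hd : 0 < Complex.normSq d := by
    refine Complex.normSq_pos.mpr fun h => ?_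
    have : ‖z * I‖ = 1 := by rw [show z * I = 1 by linear_combination -h, norm_one]
    simp [hz.ne] at this
  set w : ℂ := (1 + z * I) / d
  have hw_re : w.re = (1 - Complex.normSq z) / Complex.normSq d := by
    simp [w, d, Complex.div_re, Complex.normSq_apply]; ring
  have hw_im : w.im = 2 * z.re / Complex.normSq d := by
    simp [w, d, Complex.div_im, Complex.normSq_apply]; ring
  -- `w` lies in the right half-plane, where `arg w = arctan (w.im / w.re)`.
  have harg : Complex.arg w = Real.arctan (w.im / w.re) := by
    have hb : |Complex.arg w| < π / 2 := Complex.abs_arg_lt_pi_div_two_iff.mpr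
      (Or.inl (by rw [hw_re]; exact div_pos (by linarith) hd))
    rw [← Complex.tan_arg, Real.arctan_tan (neg_lt_of_abs_lt hb) (lt_of_abs_lt hb)]
  have hq : w.im / w.re = 2 * z.re / (1 - Complex.normSq z) := by
    rw [hw_re, hw_im]; field_simp
  rw [Complex.arctan, Complex.mul_re, Complex.log_im, harg, hq]
  simp
  ring

theorem Real.hasSum_arctan_cos {x : ℝ} (hx : |x| < 1) (θ : ℝ) :
    HasSum (fun k : ℕ => (-1) ^ k * x ^ (2 * k + 1) / (2 * k + 1) * Real.cos ((2 * k + 1) * θ))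
      (Real.arctan (2 * x / (1 - x ^ 2) * Real.cos θ) / 2) := by
  set z : ℂ := x * Complex.exp (θ * I)
  have hz : ‖z‖ = |x| := by simp [z, Complex.norm_exp]
  have hre : z.re = x * Real.cos θ := by simp [z, Complex.exp_ofReal_mul_I_re]
  have h := (Complex.hasSum_arctan (hz ▸ hx)).mapL Complex.reCLM
  rw [Complex.reCLM_apply, Complex.re_arctan (hz ▸ hx), hre, Complex.normSq_eq_norm_sq, hz,
    sq_abs] at h
  convert h using 2 with k
  · rw [Complex.reCLM_apply, mul_pow, ← Complex.exp_nat_mul]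
    have hterm : (-1) ^ k * ((x : ℂ) ^ (2 * k + 1) * Complex.exp ((2 * k + 1 : ℕ) * (θ * I))) /
        (2 * k + 1 : ℕ) = (((-1) ^ k * x ^ (2 * k + 1) / (2 * k + 1) : ℝ) : ℂ) *
          Complex.exp (((2 * k + 1) * θ : ℝ) * I) := by
      push_cast; ring_nf
    rw [hterm, Complex.re_ofReal_mul, Complex.exp_ofReal_mul_I_re]
  · ring_nf

theorem integral_tsum_const_mul_of_abs_le_one {α : Type*} [MeasurableSpace α] {μ : Measure α}
    {g : α → ℝ} (hg : Integrable g μ) {f : ℕ → α → ℝ}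
    (hf : ∀ k, AEStronglyMeasurable (f k) μ) (hf_le : ∀ k x, |f k x| ≤ 1) {c : ℕ → ℝ}
    (hc : Summable fun k => |c k|) :
    ∫ x, ∑' k, c k * (g x * f k x) ∂μ = ∑' k, c k * ∫ x, g x * f k x ∂μ := by
  have hint : ∀ k, Integrable (fun x => g x * f k x) μ := fun k =>
    hg.mul_bdd (hf k) (ae_of_all _ fun x => hf_le k x)
  have hnorm : ∀ k, ∫ x, ‖c k * (g x * f k x)‖ ∂μ ≤ |c k| * ∫ x, ‖g x‖ ∂μ := fun k => by
    rw [← integral_const_mul]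
    refine integral_mono ((hint k).const_mul _).norm (hg.norm.const_mul _) fun x => ?_
    simp only [norm_mul, Real.norm_eq_abs]
    gcongr
    exact mul_le_of_le_one_right (abs_nonneg _) (hf_le k x)
  rw [← integral_tsum_of_summable_integral_norm (fun k => (hint k).const_mul (c k))
    ((hc.mul_right _).of_nonneg_of_le (fun k => integral_nonneg fun x => norm_nonneg _) hnorm)]
  simp_rw [integral_const_mul]

theorem tsum_mul_Khat_re_eq_integral_arctan {a x : ℝ} (ha : 0 < a) (hx : |x| < 1) (L : ℝ) :
    ∑' k : ℕ, (-1) ^ k * x ^ (2 * k + 1) / (2 * k + 1) * (Khat a ((2 * k + 1) * L)).re =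
      ∫ u in Set.Ioi 0, Real.exp (-a * Real.cosh u) *
        Real.arctan (2 * x / (1 - x ^ 2) * Real.cos (u * L)) := by
  set c : ℕ → ℝ := fun k => (-1) ^ k * x ^ (2 * k + 1) / (2 * k + 1)
  have hc : Summable fun k => |c k| := by
    have hx2 : x ^ 2 < 1 := by nlinarith [abs_nonneg x, sq_abs x]
    refine .of_nonneg_of_le (fun k => abs_nonneg _) (fun k => ?_)
      ((summable_geometric_of_lt_one (sq_nonneg x) hx2).mul_left |x|)
    have h2k : (0 : ℝ) < 2 * k + 1 := by positivity
    rw [← sq_abs, ← pow_mul, ← pow_succ', abs_div, abs_mul, abs_pow, abs_neg, abs_one, one_pow,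
      one_mul, abs_pow, abs_of_pos h2k]
    exact div_le_self (by positivity) (by linarith)
  have hsum : ∀ u, ∑' k, c k * (Real.exp (-a * Real.cosh u) * Real.cos ((2 * k + 1) * L * u)) =
      Real.exp (-a * Real.cosh u) * (Real.arctan (2 * x / (1 - x ^ 2) * Real.cos (u * L)) / 2) := by
    intro u
    rw [← ((Real.hasSum_arctan_cos hx (u * L)).mul_left (Real.exp (-a * Real.cosh u))).tsum_eq]
    refine tsum_congr fun k => ?_
    rw [show (2 * k + 1) * L * u = (2 * k + 1) * (u * L) by ring]
    ring
  calc ∑' k : ℕ, c k * (Khat a ((2 * k + 1) * L)).re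
      = 2 * ∑' k, c k * ∫ u in Set.Ioi 0,
          Real.exp (-a * Real.cosh u) * Real.cos ((2 * k + 1) * L * u) := by
        rw [← tsum_mul_left]
        refine tsum_congr fun k => ?_
        rw [Khat_re_eq_two_mul_integral_Ioi ha]
        ring
    _ = _ := by
        rw [← integral_tsum_const_mul_of_abs_le_one (integrable_exp_neg_mul_cosh ha).integrableOn
          (fun k => by fun_prop) (fun k u => Real.abs_cos_le_one _) hc]
        simp_rw [hsum, ← integral_const_mul]
        congr 1 with u
        ring

theorem two_mul_inv_sqrt_div_one_sub_inv_sqrt_sq {y : ℝ} (hy : 1 < y) :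
    2 * (√y)⁻¹ / (1 - (√y)⁻¹ ^ 2) = 2 * √y / (y - 1) := by
  have hs : 1 < √y := by simpa using Real.sqrt_lt_sqrt zero_le_one hy
  have hys : y = √y ^ 2 := (Real.sq_sqrt (by linarith)).symm
  set s := √y
  have hs2 : s ^ 2 - 1 ≠ 0 := by nlinarith
  rw [hys]
  field_simp

theorem ArithmeticFunction.vonMangoldt_div_log_div_sqrt_prime_pow {p n : ℕ} (hp : p.Prime)
    (hn : n ≠ 0) :
    ArithmeticFunction.vonMangoldt (p ^ n) / Real.log ((p : ℝ) ^ n) / √((p : ℝ) ^ n) =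
      (√p)⁻¹ ^ n / n := by
  have hlog : Real.log p ≠ 0 := (Real.log_pos (by exact_mod_cast hp.one_lt)).ne'
  rw [ArithmeticFunction.vonMangoldt_apply_pow hn, ArithmeticFunction.vonMangoldt_apply_prime hp,
    Real.log_pow, inv_pow, ← Real.sqrt_sq (pow_nonneg (Real.sqrt_nonneg p) n), pow_right_comm,
    Real.sq_sqrt (Nat.cast_nonneg p)]
  field_simp

theorem odd_prime_power_sum_eq_integral_general (a τ : ℝ) (ha : 0 < a)
    (N : ℕ) :
    (1 / π) * ∑ p ∈ Finset.filter Nat.Prime (Finset.Iic N), ∑' k : ℕ,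
      (-1 : ℝ) ^ k *
        ((ArithmeticFunction.vonMangoldt (p ^ (2 * k + 1)) /
            Real.log (p ^ (2 * k + 1))) / Real.sqrt (p ^ (2 * k + 1))) *
        (Khat a (τ * Real.log (p ^ (2 * k + 1)))).re =
    (1 / π) * ∫ u in Set.Ioi (0 : ℝ), Real.exp (-a * Real.cosh u) * SN N τ u := by
  congr 1
  have harctan (y : ℝ) : |Real.arctan y| ≤ π / 2 :=
    abs_le.mpr ⟨(Real.neg_pi_div_two_lt_arctan y).le, (Real.arctan_lt_pi_div_two y).le⟩
  simp_rw [SN, Finset.mul_sum, mul_assoc _ τ]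
  rw [integral_finsetSum _ fun p _ =>
    (integrable_exp_neg_mul_cosh_mul ha (by fun_prop) fun u => harctan _).integrableOn]
  refine Finset.sum_congr rfl fun p hp => ?_
  have hp : p.Prime := (Finset.mem_filter.mp hp).2
  have hp1 : (1 : ℝ) < p := by exact_mod_cast hp.one_lt
  have hx : |(√p : ℝ)⁻¹| < 1 := by
    rw [abs_inv, abs_of_nonneg (Real.sqrt_nonneg _)]
    exact inv_lt_one_of_one_lt₀ (by simpa using Real.sqrt_lt_sqrt zero_le_one hp1)
  rw [← two_mul_inv_sqrt_div_one_sub_inv_sqrt_sq hp1,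
    ← tsum_mul_Khat_re_eq_integral_arctan ha hx]
  refine tsum_congr fun k => ?_
  rw [ArithmeticFunction.vonMangoldt_div_log_div_sqrt_prime_pow hp (by omega), Real.log_pow]
  push_cast
  ring_nf

/-- For `a, τ > 0` and an integer `N ≥ 2`,
`(1/π) Σ_{n = p^{2k+1}, p ≤ N, k ≥ 0} (−1)^k (Λ₁(n)/√n) K̂_a(τ log n)
  = (1/π) ∫_0^∞ K_a(u) S_N(u) du`. -/
theorem odd_prime_power_sum_eq_integral (a τ : ℝ) (ha : 0 < a) (hτ : 0 < τ)
    (N : ℕ) (hN : 2 ≤ N) :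
    (1 / π) * ∑ p ∈ Finset.filter Nat.Prime (Finset.Iic N), ∑' k : ℕ,
      (-1 : ℝ) ^ k *
        ((ArithmeticFunction.vonMangoldt (p ^ (2 * k + 1)) /
            Real.log (p ^ (2 * k + 1))) / Real.sqrt (p ^ (2 * k + 1))) *
        (Khat a (τ * Real.log (p ^ (2 * k + 1)))).re =
    (1 / π) * ∫ u in Set.Ioi (0 : ℝ), Real.exp (-a * Real.cosh u) * SN N τ u :=
  odd_prime_power_sum_eq_integral_general a τ ha N
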